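/- Let C₄ ⊆ (ℤ/4ℤ)⁶ be the ℤ/4ℤ-linear code generated by the rows of G = [[1,0,0,0,1,1],[0,1,0,1,0,2],[0,0,1,1,2,0]], and let Λ = (1/2)·{x ∈ ℤ⁶ : (x mod 4) ∈ C₄} be its Construction A lattice. Then there exists τ > 0 such that Θ_Λ(iτ) > Θ_{ℤ⁶}(iτ), i.e., the theta series ratio Δ_Λ(τ) exceeds 1 for some τ > 0. -/

import Mathlib

/-!
Everything is a comparison of the two smallest shells at `τ = 16`. The vector
`(1,0,0,0,1,1)/2` lies in `Λ` and has squared norm `3/4`, so `Θ_Λ(16i) ≥ 1 + e^{-12π}`.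
On the other side every nonzero `x ∈ ℤ⁶` has `‖x‖² ≥ 1`, so
`Θ_{ℤ⁶}(16i) ≤ 1 + e^{-15π} Θ_{ℤ⁶}(i) ≤ 1 + 2⁶ e^{-15π}`, where `Θ_ℤ(i) ≤ 2` comes from
`e^{-πn²} ≤ (e^{-π})^{|n|}` and `e^{-π} < 1/4`. Finally `2⁶ < e^{3π}` because `e^π > 1 + π > 4`.
-/

/-- The rows of the generator matrix of the ℤ/4ℤ-linear code `C₄`. -/
def genC4 : Fin 3 → (Fin 6 → ZMod 4) :=
  ![![1, 0, 0, 0, 1, 1], ![0, 1, 0, 1, 0, 2], ![0, 0, 1, 1, 2, 0]]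

/-- The code `C₄ ⊆ (ℤ/4ℤ)⁶` generated by the rows of `genC4`. -/
def codeC4 : Submodule (ZMod 4) (Fin 6 → ZMod 4) :=
  Submodule.span (ZMod 4) (Set.range genC4)

/-- The Construction A lattice `Λ = (1/2)·{x ∈ ℤ⁶ : x mod 4 ∈ C₄}`. -/
def latticeC4 : Set (Fin 6 → ℝ) :=
  { v | ∃ x : Fin 6 → ℤ, (fun i => (x i : ZMod 4)) ∈ codeC4 ∧
    v = fun i => (x i : ℝ) / 2 }

open Real Finset

theorem sum_prod_le_tsum_pow {ι κ : Type*} [Fintype κ] {f : ι → ℝ} (hf₀ : 0 ≤ f)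
    (hf : Summable f) (T : Finset (κ → ι)) :
    ∑ x ∈ T, ∏ j, f (x j) ≤ (∑' i, f i) ^ Fintype.card κ := by
  classical
  set s := T.biUnion fun x => univ.image x
  have hT : T ⊆ Fintype.piFinset fun _ => s := fun x hx =>
    Fintype.mem_piFinset.2 fun j => mem_biUnion.2 ⟨x, hx, mem_image_of_mem _ (mem_univ j)⟩
  calc ∑ x ∈ T, ∏ j, f (x j)
      ≤ ∑ x ∈ Fintype.piFinset fun _ => s, ∏ j, f (x j) :=
        sum_le_sum_of_subset_of_nonneg hT fun x _ _ => prod_nonneg fun j _ => hf₀ _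
    _ = ∏ _j : κ, ∑ i ∈ s, f i := (prod_univ_sum _ _).symm
    _ ≤ ∏ _j : κ, ∑' i, f i :=
        prod_le_prod (fun _ _ => sum_nonneg fun i _ => hf₀ i)
          fun _ _ => hf.sum_le_tsum s fun i _ => hf₀ i
    _ = (∑' i, f i) ^ Fintype.card κ := prod_const _

theorem hasSum_pow_natAbs {r : ℝ} (h₀ : 0 ≤ r) (h₁ : r < 1) :
    HasSum (fun n : ℤ => r ^ n.natAbs) ((1 + r) / (1 - r)) := by
  have hg := hasSum_geometric_of_lt_one h₀ h₁
  have h := HasSum.of_nat_of_neg (f := fun n : ℤ => r ^ n.natAbs) (by simpa using hg)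
    (by simpa using hg)
  have : 1 - r ≠ 0 := by linarith
  rwa [Int.natAbs_zero, pow_zero, ← two_mul, ← div_eq_mul_inv,
    show 2 / (1 - r) - 1 = (1 + r) / (1 - r) by field_simp; ring] at h

theorem exp_neg_mul_sq_le_pow_natAbs {a : ℝ} (ha : 0 ≤ a) (n : ℤ) :
    exp (-a * (n : ℝ) ^ 2) ≤ exp (-a) ^ n.natAbs := by
  have h : (n.natAbs : ℝ) ≤ (n : ℝ) ^ 2 := by
    have := Int.natAbs_le_self_sq n
    rw [Int.natCast_natAbs] at this
    rw [Nat.cast_natAbs]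
    exact_mod_cast this
  rw [← exp_nat_mul]
  exact exp_le_exp.2 (by nlinarith)

theorem one_le_sum_sq_of_ne_zero {ι : Type*} [Fintype ι] {x : ι → ℤ} (hx : x ≠ 0) :
    1 ≤ ∑ j, (x j : ℝ) ^ 2 := by
  obtain ⟨j, hj⟩ := Function.ne_iff.1 hx
  have : (1 : ℝ) ≤ (x j : ℝ) ^ 2 := by
    rw [one_le_sq_iff_one_le_abs, ← Int.cast_abs]
    exact_mod_cast Int.one_le_abs hj
  exact this.trans (single_le_sum (fun i _ => sq_nonneg (x i : ℝ)) (mem_univ j))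

theorem four_lt_exp_pi : 4 < exp π := by
  linarith [add_one_lt_exp pi_ne_zero, pi_gt_three]

section IntegerLattice

variable {ι : Type*} [Fintype ι]

theorem sum_exp_neg_pi_mul_sum_sq_le {τ : ℝ} (hτ : 0 < τ) (T : Finset (ι → ℤ)) :
    ∑ x ∈ T, exp (-π * τ * ∑ j, (x j : ℝ) ^ 2)
      ≤ ((1 + exp (-(π * τ))) / (1 - exp (-(π * τ)))) ^ Fintype.card ι := by
  have hπτ : 0 < π * τ := by positivity
  have hq := hasSum_pow_natAbs (exp_pos (-(π * τ))).le (exp_lt_one_iff.2 (neg_lt_zero.2 hπτ))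
  rw [← hq.tsum_eq]
  calc ∑ x ∈ T, exp (-π * τ * ∑ j, (x j : ℝ) ^ 2)
      ≤ ∑ x ∈ T, ∏ j, exp (-(π * τ)) ^ (x j).natAbs := by
        refine sum_le_sum fun x _ => ?_
        rw [mul_sum, exp_sum]
        refine prod_le_prod (fun _ _ => (exp_pos _).le) fun j _ => ?_
        simpa only [neg_mul] using exp_neg_mul_sq_le_pow_natAbs hπτ.le (x j)
    _ ≤ _ := sum_prod_le_tsum_pow (fun _ => pow_nonneg (exp_pos _).le _) hq.summable T

theorem summable_exp_neg_pi_mul_sum_sq {τ : ℝ} (hτ : 0 < τ) :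
    Summable fun x : ι → ℤ => exp (-π * τ * ∑ j, (x j : ℝ) ^ 2) :=
  summable_of_sum_le (fun _ => (exp_pos _).le) (sum_exp_neg_pi_mul_sum_sq_le hτ)

theorem tsum_exp_neg_pi_mul_sum_sq_le_two_pow {τ : ℝ} (hτ : 1 ≤ τ) :
    ∑' x : ι → ℤ, exp (-π * τ * ∑ j, (x j : ℝ) ^ 2) ≤ 2 ^ Fintype.card ι := by
  have hr : exp (-(π * τ)) < 1 / 4 := by
    calc exp (-(π * τ)) ≤ exp (-π) := exp_le_exp.2 (by nlinarith [pi_pos])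
      _ = (exp π)⁻¹ := exp_neg π
      _ < 1 / 4 := by rw [one_div]; exact inv_strictAnti₀ (by norm_num) four_lt_exp_pi
  have hratio : (1 + exp (-(π * τ))) / (1 - exp (-(π * τ))) ≤ 2 := by
    rw [div_le_iff₀ (by linarith)]; linarith
  refine tsum_le_of_sum_le' (by positivity) fun T => ?_
  exact (sum_exp_neg_pi_mul_sum_sq_le (by linarith) T).trans
    (pow_le_pow_left₀ (div_nonneg (by positivity) (by linarith)) hratio _)

theorem tsum_exp_neg_pi_mul_sum_sq_le_one_add {σ τ : ℝ} (hσ : 0 < σ) (hστ : σ ≤ τ) :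
    ∑' x : ι → ℤ, exp (-π * τ * ∑ j, (x j : ℝ) ^ 2)
      ≤ 1 + exp (-π * (τ - σ)) * ∑' x : ι → ℤ, exp (-π * σ * ∑ j, (x j : ℝ) ^ 2) := by
  classical
  set f := fun x : ι → ℤ => exp (-π * τ * ∑ j, (x j : ℝ) ^ 2)
  set g := fun x : ι → ℤ => exp (-π * σ * ∑ j, (x j : ℝ) ^ 2)
  have hg := summable_exp_neg_pi_mul_sum_sq (ι := ι) hσ
  have htail : ∀ x, (if x = 0 then 0 else f x) ≤ exp (-π * (τ - σ)) * g x := by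
    intro x
    split_ifs with hx
    · positivity
    · rw [← exp_add]
      have hgap := mul_nonneg (mul_nonneg pi_pos.le (sub_nonneg.2 hστ))
        (sub_nonneg.2 (one_le_sum_sq_of_ne_zero hx))
      exact exp_le_exp.2 (by nlinarith)
  have htail_summable : Summable fun x => if x = 0 then 0 else f x :=
    (hg.mul_left _).of_nonneg_of_le (fun x => by split_ifs <;> positivity) htail
  have hf : Summable f := summable_exp_neg_pi_mul_sum_sq (hσ.trans_le hστ)
  have hf0 : f 0 = 1 := by simp [f]
  rw [hf.tsum_eq_add_tsum_ite 0, hf0, ← tsum_mul_left]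
  exact add_le_add_right (htail_summable.tsum_le_tsum htail (hg.mul_left _)) 1

theorem summable_exp_neg_pi_mul_sum_sq_of_subset_range_half {S : Set (ι → ℝ)}
    (hS : S ⊆ Set.range fun (x : ι → ℤ) i => (x i : ℝ) / 2) {τ : ℝ} (hτ : 0 < τ) :
    Summable fun v : S => exp (-π * τ * ∑ j, (v : ι → ℝ) j ^ 2) := by
  set half : (ι → ℤ) → ι → ℝ := fun x i => (x i : ℝ) / 2
  set F : (ι → ℝ) → ℝ := fun v => exp (-π * τ * ∑ j, v j ^ 2)
  have hhalf : Function.Injective half := fun x y h =>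
    funext fun i => by simpa [half] using congrFun h i
  have hscaled : Summable (F ∘ half) := by
    refine (summable_exp_neg_pi_mul_sum_sq (τ := τ / 4) (by positivity)).congr fun x => ?_
    simp only [F, half, Function.comp_apply, div_pow, ← sum_div]
    ring_nf
  have hrange : Summable fun v : Set.range half => F v :=
    (hhalf.hasSum_range_iff.2 hscaled.hasSum).summable
  exact (hrange.comp_injective (Set.inclusion_injective hS) :)

end IntegerLattice

theorem latticeC4_subset_range_half :
    latticeC4 ⊆ Set.range fun (x : Fin 6 → ℤ) i => (x i : ℝ) / 2 :=
  fun _ ⟨x, _, hx⟩ => ⟨x, hx.symm⟩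

theorem zero_mem_latticeC4 : (0 : Fin 6 → ℝ) ∈ latticeC4 :=
  ⟨0, by convert codeC4.zero_mem; simp, by funext; simp⟩

theorem half_mem_latticeC4 :
    (fun i => ((![1, 0, 0, 0, 1, 1] : Fin 6 → ℤ) i : ℝ) / 2) ∈ latticeC4 := by
  refine ⟨![1, 0, 0, 0, 1, 1], ?_, rfl⟩
  have hrow : (fun i => (((![1, 0, 0, 0, 1, 1] : Fin 6 → ℤ) i : ℤ) : ZMod 4)) = genC4 0 := by
    decide
  rw [hrow]
  exact Submodule.subset_span ⟨0, rfl⟩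

theorem one_add_exp_le_tsum_latticeC4 {τ : ℝ} (hτ : 0 < τ) :
    1 + exp (-π * τ * (3 / 4)) ≤ ∑' v : latticeC4, exp (-π * τ * ∑ j, (v : Fin 6 → ℝ) j ^ 2) := by
  set z : latticeC4 := ⟨0, zero_mem_latticeC4⟩
  set w : latticeC4 := ⟨_, half_mem_latticeC4⟩
  have hzw : z ≠ w := fun h => by simpa [z, w] using congrFun (congrArg Subtype.val h) 0
  have hsum := summable_exp_neg_pi_mul_sum_sq_of_subset_range_half
    latticeC4_subset_range_half hτ
  have hpair := hsum.sum_le_tsum {z, w} fun _ _ => (exp_pos _).le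
  have hz : exp (-π * τ * ∑ j, (z : Fin 6 → ℝ) j ^ 2) = 1 := by simp [z]
  have hw : ∑ j, (w : Fin 6 → ℝ) j ^ 2 = 3 / 4 := by
    norm_num [w, Fin.sum_univ_succ]
  rwa [sum_pair hzw, hz, hw] at hpair

/-- there exists `τ > 0` with `Θ_Λ(iτ) > Θ_{ℤ⁶}(iτ)` for
`Λ = A₄(C₄)`, i.e. the theta series ratio `Δ_Λ(τ)` exceeds `1` for some `τ > 0`. -/
theorem latticeC4_theta_ratio_exceeds_one :
    ∃ τ : ℝ, 0 < τ ∧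
      (∑' v : latticeC4, Real.exp (-Real.pi * τ * ∑ j, ((v : Fin 6 → ℝ) j) ^ 2))
        > (∑' x : Fin 6 → ℤ, Real.exp (-Real.pi * τ * ∑ j, ((x j : ℝ)) ^ 2)) := by
  refine ⟨16, by norm_num, ?_⟩
  have hgap : exp (-π * (16 - 1)) * 2 ^ 6 < exp (-π * 16 * (3 / 4)) := by
    have h64 : (2 : ℝ) ^ 6 < exp (3 * π) := by
      rw [show (3 : ℝ) * π = ((3 : ℕ) : ℝ) * π by norm_num, exp_nat_mul]
      calc (2 : ℝ) ^ 6 = 4 ^ 3 := by norm_num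
        _ < exp π ^ 3 := pow_lt_pow_left₀ four_lt_exp_pi (by norm_num) (by norm_num)
    rw [show -π * 16 * (3 / 4) = -π * (16 - 1) + 3 * π by ring, exp_add]
    exact mul_lt_mul_of_pos_left h64 (exp_pos _)
  rw [gt_iff_lt]
  calc ∑' x : Fin 6 → ℤ, exp (-π * 16 * ∑ j, (x j : ℝ) ^ 2)
      ≤ 1 + exp (-π * (16 - 1)) * ∑' x : Fin 6 → ℤ, exp (-π * 1 * ∑ j, (x j : ℝ) ^ 2) :=
        tsum_exp_neg_pi_mul_sum_sq_le_one_add one_pos (by norm_num)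
    _ ≤ 1 + exp (-π * (16 - 1)) * 2 ^ 6 := by
        gcongr
        simpa using tsum_exp_neg_pi_mul_sum_sq_le_two_pow (ι := Fin 6) le_rfl
    _ < 1 + exp (-π * 16 * (3 / 4)) := by linarith
    _ ≤ ∑' v : latticeC4, exp (-π * 16 * ∑ j, (v : Fin 6 → ℝ) j ^ 2) :=
        one_add_exp_le_tsum_latticeC4 (by norm_num)
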